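/- arXiv:2604.26043 — 4 statements merged into one kernel-verified Lean document; each statement's English description precedes it below -/
import Mathlib

section
/- Let b, b̃ ∈ {X,Y,Z}^n be distinct strings and let r := min{ i : b_i ≠ b̃_i } be their first point of disagreement. Then the trace distance between the corresponding prefix/tree states satisfies the upper bound (1/2)‖ρ_b − ρ_{b̃}‖₁ ≤ ∑_{k=r}^{n−1} |β_k| + |α|. -/
open Matrix Finset

noncomputable section

/-- The three Pauli matrices `σ_X, σ_Y, σ_Z` as `2 × 2` complex matrices. -/
def pauli : Fin 3 → Matrix (Fin 2) (Fin 2) ℂ :=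
  ![!![0, 1; 1, 0], !![0, -Complex.I; Complex.I, 0], !![1, 0; 0, -1]]

/-- The prefix Pauli operator `P_b^{(k)} = (⊗_{i=1}^k σ_{b_i}) ⊗ I^{⊗(n-k)}`, realized as a
`2^n × 2^n` complex matrix indexed by `Fin n → Fin 2` (the `i`-th tensor factor of the Kronecker
product is `σ_{b_i}` if `i < k` (0-indexed) and the identity otherwise). -/
def prefixPauli (n : ℕ) (b : Fin n → Fin 3) (k : ℕ) :
    Matrix (Fin n → Fin 2) (Fin n → Fin 2) ℂ :=
  Matrix.of fun x y =>
    ∏ i : Fin n,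
      (if (i : ℕ) < k then pauli (b i) else (1 : Matrix (Fin 2) (Fin 2) ℂ)) (x i) (y i)

/-- The prefix/tree state `ρ_b = (1/D)(I + ∑_{k=1}^{n-1} β_k P_b^{(k)} + α P_b^{(n)})`,
with `D = 2^n`. -/
def rhoState (n : ℕ) (b : Fin n → Fin 3) (α : ℝ) (β : ℕ → ℝ) :
    Matrix (Fin n → Fin 2) (Fin n → Fin 2) ℂ :=
  ((2 : ℂ) ^ n)⁻¹ •
    (1 + ∑ k ∈ Finset.Icc 1 (n - 1), (β k : ℂ) • prefixPauli n b k
       + (α : ℂ) • prefixPauli n b n)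

/-- The trace norm of a Hermitian matrix: the sum of the absolute values of its (real)
eigenvalues. -/
def traceNorm {d : Type*} [Fintype d] [DecidableEq d] {A : Matrix d d ℂ}
    (hA : A.IsHermitian) : ℝ :=
  ∑ i, |hA.eigenvalues i|

/-!
Write `γ` for `β` with `γ n = α`. Prefix operators of length `< r` agree for `b` and `b̃`, so
`Δ := ρ_b - ρ_{b̃} = 2⁻ⁿ ∑_{k=r}^{n} γ_k (P_b^{(k)} - P_{b̃}^{(k)})`. Since
`tr (σ_a σ_c) = 2 δ_{ac}` and `tr σ_a = 0`, these differences are orthogonal for the trace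
form, each with `tr ((P_b^{(k)} - P_{b̃}^{(k)})²) = 2 · 2ⁿ` (the strings differ at position
`r ≤ k`). Hence `tr Δ² = 2^{1-n} ∑ γ_k²`, and Cauchy–Schwarz over the `2ⁿ` eigenvalues of `Δ`
gives `‖Δ‖₁² ≤ 2ⁿ tr Δ² = 2 ∑ γ_k² ≤ 2 (∑ |γ_k|)²`.
-/

namespace Matrix

variable {ι m R : Type*} [Fintype ι] [DecidableEq ι] [Fintype m] [CommSemiring R]

def piKron (M : ι → Matrix m m R) : Matrix (ι → m) (ι → m) R :=
  of fun x y => ∏ i, M i (x i) (y i)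

theorem piKron_mul (M N : ι → Matrix m m R) :
    piKron M * piKron N = piKron (M * N) := by
  ext x y
  simp only [piKron, mul_apply, of_apply, Pi.mul_apply, ← Finset.prod_mul_distrib]
  rw [← Finset.sum_prod_piFinset, Fintype.piFinset_univ]

theorem trace_piKron (M : ι → Matrix m m R) : (piKron M).trace = ∏ i, (M i).trace := by
  simp only [trace, diag, piKron, of_apply]
  rw [← Finset.sum_prod_piFinset, Fintype.piFinset_univ]

end Matrix

theorem trace_pauli (a : Fin 3) : (pauli a).trace = 0 := by
  fin_cases a <;> simp [pauli, trace, Fin.sum_univ_two]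

theorem trace_pauli_mul_pauli (a c : Fin 3) :
    (pauli a * pauli c).trace = if a = c then 2 else 0 := by
  fin_cases a <;> fin_cases c <;> simp [pauli, trace, Fin.sum_univ_two] <;> norm_num

def prefixFactor {n : ℕ} (b : Fin n → Fin 3) (k : ℕ) (i : Fin n) : Matrix (Fin 2) (Fin 2) ℂ :=
  if (i : ℕ) < k then pauli (b i) else 1

theorem prefixPauli_eq_piKron (n : ℕ) (b : Fin n → Fin 3) (k : ℕ) :
    prefixPauli n b k = piKron (prefixFactor b k) :=
  rfl

theorem trace_prefixFactor_mul {n : ℕ} (b c : Fin n → Fin 3) (k l : ℕ) (i : Fin n) :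
    (prefixFactor b k i * prefixFactor c l i).trace =
      if ((i : ℕ) < k ↔ (i : ℕ) < l) ∧ ((i : ℕ) < k → b i = c i) then 2 else 0 := by
  unfold prefixFactor
  by_cases hk : (i : ℕ) < k <;> by_cases hl : (i : ℕ) < l <;>
    simp [hk, hl, trace_pauli, trace_pauli_mul_pauli]

theorem trace_prefixPauli_mul (n : ℕ) (b c : Fin n → Fin 3) (k l : ℕ) :
    (prefixPauli n b k * prefixPauli n c l).trace =
      if ∀ i : Fin n, ((i : ℕ) < k ↔ (i : ℕ) < l) ∧ ((i : ℕ) < k → b i = c i)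
      then 2 ^ n else 0 := by
  simp only [prefixPauli_eq_piKron, piKron_mul, trace_piKron, Pi.mul_apply,
    trace_prefixFactor_mul, Finset.prod_ite_zero, Finset.mem_univ, forall_const,
    Finset.prod_const, Finset.card_univ, Fintype.card_fin]

theorem trace_prefixPauli_mul_same {n k l : ℕ} (b : Fin n → Fin 3) (hk : k ≤ n) (hl : l ≤ n) :
    (prefixPauli n b k * prefixPauli n b l).trace = if k = l then 2 ^ n else 0 := by
  rw [trace_prefixPauli_mul]
  congr 1
  simp only [imp_true_iff, and_true, eq_iff_iff]
  refine ⟨fun h => ?_, fun h i => by rw [h]⟩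
  by_contra hkl
  have := h ⟨min k l, by omega⟩
  simp only at this
  omega

theorem trace_prefixPauli_mul_eq_zero_of_ne {n k : ℕ} {b c : Fin n → Fin 3} {j : Fin n}
    (hj : (j : ℕ) < k) (hbc : b j ≠ c j) (l : ℕ) :
    (prefixPauli n b k * prefixPauli n c l).trace = 0 := by
  rw [trace_prefixPauli_mul, if_neg]
  exact fun h => hbc ((h j).2 hj)

theorem prefixPauli_congr {n k : ℕ} {b c : Fin n → Fin 3}
    (h : ∀ i : Fin n, (i : ℕ) < k → b i = c i) :
    prefixPauli n b k = prefixPauli n c k := by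
  rw [prefixPauli_eq_piKron, prefixPauli_eq_piKron]
  congr 1
  funext i
  unfold prefixFactor
  split_ifs with hi
  · rw [h i hi]
  · rfl

theorem Matrix.trace_sum_smul_mul_sum_smul {ι m R : Type*} [DecidableEq ι] [Fintype m]
    [CommSemiring R] (s : Finset ι) (Q : ι → Matrix m m R) (γ : ι → R) (c : R)
    (hQ : ∀ k ∈ s, ∀ l ∈ s, (Q k * Q l).trace = if k = l then c else 0) :
    ((∑ k ∈ s, γ k • Q k) * ∑ k ∈ s, γ k • Q k).trace = c * ∑ k ∈ s, γ k ^ 2 := by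
  simp only [Finset.sum_mul, Finset.mul_sum, smul_mul_smul_comm, trace_sum, trace_smul,
    smul_eq_mul]
  refine Finset.sum_congr rfl fun k hk => ?_
  rw [Finset.sum_congr rfl fun l hl => by rw [hQ l hl k hk], Finset.sum_eq_single_of_mem k hk]
  · rw [if_pos rfl]; ring
  · intro l _ hlk; simp [hlk]

theorem Matrix.IsHermitian.trace_mul_self {𝕜 n : Type*} [RCLike 𝕜] [Fintype n] [DecidableEq n]
    {A : Matrix n n 𝕜} (hA : A.IsHermitian) :
    (A * A).trace = ∑ i, (hA.eigenvalues i : 𝕜) ^ 2 := by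
  conv_lhs => rw [hA.spectral_theorem, ← map_mul, Unitary.conjStarAlgAut_apply, trace_mul_cycle,
    Unitary.coe_star_mul_self, one_mul, diagonal_mul_diagonal, trace_diagonal]
  simp [sq]

theorem traceNorm_sq_le_card_mul_trace_mul_self {d : Type*} [Fintype d] [DecidableEq d]
    {A : Matrix d d ℂ} (hA : A.IsHermitian) :
    traceNorm hA ^ 2 ≤ Fintype.card d * ((A * A).trace).re := by
  simp only [hA.trace_mul_self, RCLike.ofReal_eq_complex_ofReal, Complex.re_sum,
    ← Complex.ofReal_pow, Complex.ofReal_re]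
  simpa [traceNorm] using sq_sum_le_card_mul_sum_sq (s := Finset.univ)
    (f := fun i => |hA.eigenvalues i|)

theorem sum_Icc_update_top {α M : Type*} [AddCommMonoid M] (f : ℕ → α) (a : α)
    (φ : ℕ → α → M) {r n : ℕ} (hr : r ≤ n) (hn : 1 ≤ n) :
    ∑ k ∈ Icc r n, φ k (Function.update f n a k) = ∑ k ∈ Icc r (n - 1), φ k (f k) + φ n a := by
  obtain ⟨m, rfl⟩ : ∃ m, n = m + 1 := ⟨n - 1, by omega⟩
  rw [Finset.sum_Icc_succ_top (by omega), Function.update_self, Nat.add_sub_cancel]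
  congr 1
  refine Finset.sum_congr rfl fun k hk => ?_
  rw [Function.update_of_ne (by simp only [mem_Icc] at hk; omega)]

section rhoState

variable {n : ℕ} {b c : Fin n → Fin 3} {α : ℝ} {β : ℕ → ℝ} {r : ℕ}

theorem rhoState_eq_sum_Icc (hn : 1 ≤ n) :
    rhoState n b α β = ((2 : ℂ) ^ n)⁻¹ •
      (1 + ∑ k ∈ Icc 1 n, (Function.update β n α k : ℂ) • prefixPauli n b k) := by
  rw [rhoState, sum_Icc_update_top β α (fun k x => (x : ℂ) • prefixPauli n b k) hn hn, add_assoc]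

theorem rhoState_sub_rhoState (hn : 1 ≤ n) (hr : 1 ≤ r)
    (hagree : ∀ i : Fin n, (i : ℕ) + 1 < r → b i = c i) :
    rhoState n b α β - rhoState n c α β = ((2 : ℂ) ^ n)⁻¹ •
      ∑ k ∈ Icc r n, (Function.update β n α k : ℂ) • (prefixPauli n b k - prefixPauli n c k) := by
  rw [rhoState_eq_sum_Icc hn, rhoState_eq_sum_Icc hn, ← smul_sub, add_sub_add_left_eq_sub,
    ← Finset.sum_sub_distrib]
  simp_rw [← smul_sub]
  congr 1
  refine (Finset.sum_subset (Icc_subset_Icc_left hr) fun k hk hkr => ?_).symm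
  simp only [mem_Icc] at hk hkr
  rw [prefixPauli_congr fun i hi => hagree i (by omega), sub_self, smul_zero]

theorem trace_prefixPauli_sub_mul_prefixPauli_sub {j : Fin n} (hbc : b j ≠ c j) {k l : ℕ}
    (hjk : (j : ℕ) < k) (hk : k ≤ n) (hl : l ≤ n) :
    ((prefixPauli n b k - prefixPauli n c k) * (prefixPauli n b l - prefixPauli n c l)).trace =
      if k = l then 2 * 2 ^ n else 0 := by
  rw [sub_mul, mul_sub, mul_sub, trace_sub, trace_sub, trace_sub,
    trace_prefixPauli_mul_same b hk hl, trace_prefixPauli_mul_same c hk hl,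
    trace_prefixPauli_mul_eq_zero_of_ne hjk hbc,
    trace_prefixPauli_mul_eq_zero_of_ne hjk hbc.symm]
  split_ifs <;> ring

theorem trace_rhoState_sub_mul_self (hn : 1 ≤ n) (hr1 : 1 ≤ r) (hrn : r ≤ n)
    (hagree : ∀ i : Fin n, (i : ℕ) + 1 < r → b i = c i)
    (hdiff : ∀ i : Fin n, (i : ℕ) + 1 = r → b i ≠ c i) :
    ((rhoState n b α β - rhoState n c α β) * (rhoState n b α β - rhoState n c α β)).trace =
      ((2 / 2 ^ n * ∑ k ∈ Icc r n, Function.update β n α k ^ 2 : ℝ) : ℂ) := by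
  have hbc := hdiff ⟨r - 1, by omega⟩ (by simp only; omega)
  rw [rhoState_sub_rhoState hn hr1 hagree, smul_mul_smul_comm, trace_smul,
    trace_sum_smul_mul_sum_smul _ _ _ (2 * 2 ^ n) fun k hk l hl => ?_]
  · have h2n : (2 : ℂ) ^ n ≠ 0 := pow_ne_zero n two_ne_zero
    rw [smul_eq_mul]
    push_cast
    field_simp
  · simp only [mem_Icc] at hk hl
    exact trace_prefixPauli_sub_mul_prefixPauli_sub hbc (by simp only; omega) hk.2 hl.2

end rhoState

/-- Trace-distance upper bound: if the hidden strings of two prefix/tree states first disagree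
at the (1-indexed) position `r`, then `(1/2)‖ρ_b − ρ_{b̃}‖₁ ≤ ∑_{k=r}^{n-1} |β_k| + |α|`. -/
theorem rhoState_traceDist_upper (n : ℕ) (hn : 1 ≤ n) (b btil : Fin n → Fin 3)
    (α : ℝ) (β : ℕ → ℝ) (r : ℕ) (hr1 : 1 ≤ r) (hrn : r ≤ n)
    (hagree : ∀ i : Fin n, (i : ℕ) + 1 < r → b i = btil i)
    (hdiff : ∀ i : Fin n, (i : ℕ) + 1 = r → b i ≠ btil i)
    (hΔ : (rhoState n b α β - rhoState n btil α β).IsHermitian) :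
    (1 / 2) * traceNorm hΔ ≤ (∑ k ∈ Finset.Icc r (n - 1), |β k|) + |α| := by
  set γ := Function.update β n α
  have hsq : traceNorm hΔ ^ 2 ≤ 2 * ∑ k ∈ Icc r n, γ k ^ 2 := by
    have h := traceNorm_sq_le_card_mul_trace_mul_self hΔ
    rwa [trace_rhoState_sub_mul_self hn hr1 hrn hagree hdiff, Complex.ofReal_re,
      Fintype.card_fun, Fintype.card_fin, Fintype.card_fin, Nat.cast_pow, Nat.cast_ofNat,
      ← mul_assoc, mul_div_cancel₀ _ (by positivity)] at h
  have hγ : ∑ k ∈ Icc r n, γ k ^ 2 ≤ (∑ k ∈ Icc r n, |γ k|) ^ 2 := by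
    simpa using sum_sq_le_sq_sum_of_nonneg fun k _ => abs_nonneg (γ k)
  rw [← sum_Icc_update_top β α (fun _ x => |x|) hrn hn]
  refine le_of_pow_le_pow_left₀ two_ne_zero (sum_nonneg fun k _ => abs_nonneg (γ k)) ?_
  nlinarith

end
end

section
/- Let n ≥ 1, let u⋆ ∈ {X,Y,Z}^{n−1}, set b^{(0)} := (u⋆, X) and b^{(1)} := (u⋆, Y), and let ρ^{(0)} := ρ_{b^{(0)}} and ρ^{(1)} := ρ_{b^{(1)}} be the corresponding prefix/tree states with coefficients α, β_1,…,β_{n−1}. Then for every basis string b ∈ {X,Y,Z}^n with b ≠ b^{(0)} and b ≠ b^{(1)}, the one-shot outcome distributions coincide: Tr(Π_o^{(b)} ρ^{(0)}) = Tr(Π_o^{(b)} ρ^{(1)}) for every outcome o ∈ {0,1}^n. -/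
open Matrix Finset

noncomputable section

/-- The product-Pauli measurement projector
`Π_o^{(b)} = ⊗_{i=1}^n (I₂ + (−1)^{o_i} σ_{b_i})/2`, realized as a `2^n × 2^n` complex matrix
indexed by `Fin n → Fin 2`. -/
def projOutcome (n : ℕ) (b : Fin n → Fin 3) (o : Fin n → Fin 2) :
    Matrix (Fin n → Fin 2) (Fin n → Fin 2) ℂ :=
  Matrix.of fun x y =>
    ∏ i : Fin n,
      ((2 : ℂ)⁻¹ • ((1 : Matrix (Fin 2) (Fin 2) ℂ) + ((-1 : ℂ) ^ (o i : ℕ)) • pauli (b i)))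
        (x i) (y i)

/-- The prefix statistic `S_k(o) = ∏_{i=1}^k (−1)^{o_i}`. -/
def prefixStat (n : ℕ) (k : ℕ) (o : Fin n → Fin 2) : ℂ :=
  ∏ i : Fin n, if (i : ℕ) < k then (-1 : ℂ) ^ (o i : ℕ) else 1


lemma trace_prodMat {n : ℕ} (A B : Fin n → Matrix (Fin 2) (Fin 2) ℂ) :
    (Matrix.of (fun x y : Fin n → Fin 2 => ∏ i, A i (x i) (y i)) *
     Matrix.of (fun x y : Fin n → Fin 2 => ∏ i, B i (x i) (y i))).trace
    = ∏ i, (A i * B i).trace := by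
  simp only [Matrix.trace, Matrix.diag_apply, Matrix.mul_apply, Matrix.of_apply]
  calc ∑ x : Fin n → Fin 2, ∑ y : Fin n → Fin 2,
        (∏ i, A i (x i) (y i)) * ∏ i, B i (y i) (x i)
      = ∑ x : Fin n → Fin 2, ∏ i, ∑ c, A i (x i) c * B i c (x i) := by
        refine Finset.sum_congr rfl fun x _ => ?_
        rw [Fintype.prod_sum]
        exact Finset.sum_congr rfl fun y _ => Finset.prod_mul_distrib.symm
    _ = ∏ i, ∑ a, ∑ c, A i a c * B i c a :=
        (Fintype.prod_sum fun i a => ∑ c, A i a c * B i c a).symm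
    _ = ∏ i, (A i * B i).trace := by
        simp [Matrix.trace, Matrix.mul_apply]

lemma tr_proj_pauli (s : ℂ) (c c' : Fin 3) :
    (((2 : ℂ)⁻¹ • ((1 : Matrix (Fin 2) (Fin 2) ℂ) + s • pauli c)) * pauli c').trace
      = if c = c' then s else 0 := by
  fin_cases c <;> fin_cases c' <;>
    simp [pauli, Matrix.trace_fin_two, Matrix.mul_apply, Fin.sum_univ_two,
      Matrix.one_apply, Complex.ext_iff] <;> exact ⟨by ring, by ring⟩

lemma tr_proj_one (s : ℂ) (c : Fin 3) :
    (((2 : ℂ)⁻¹ • ((1 : Matrix (Fin 2) (Fin 2) ℂ) + s • pauli c)) *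
      (1 : Matrix (Fin 2) (Fin 2) ℂ)).trace = 1 := by
  fin_cases c <;>
    simp [pauli, Matrix.trace_fin_two, Matrix.mul_apply, Fin.sum_univ_two,
      Matrix.one_apply]

/-- Outside the hard pair `b^{(0)} = (u⋆, X)`, `b^{(1)} = (u⋆, Y)`, the one-shot outcome laws of
the two hard states coincide: for every basis `b` with `b ≠ b^{(0)}` and `b ≠ b^{(1)}` and every
outcome `o`, `Tr(Π_o^{(b)} ρ^{(0)}) = Tr(Π_o^{(b)} ρ^{(1)})`. -/
theorem one_shot_laws_coincide (n : ℕ) (hn : 1 ≤ n)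
    (ustar : Fin (n - 1) → Fin 3) (α : ℝ) (β : ℕ → ℝ)
    (b0 b1 : Fin n → Fin 3)
    (hb0 : ∀ i : Fin n, b0 i = if h : (i : ℕ) < n - 1 then ustar ⟨(i : ℕ), h⟩ else 0)
    (hb1 : ∀ i : Fin n, b1 i = if h : (i : ℕ) < n - 1 then ustar ⟨(i : ℕ), h⟩ else 1)
    (b : Fin n → Fin 3) (h0 : b ≠ b0) (h1 : b ≠ b1) (o : Fin n → Fin 2) :
    (projOutcome n b o * rhoState n b0 α β).trace =
      (projOutcome n b o * rhoState n b1 α β).trace := by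
  have key : ∀ (b' : Fin n → Fin 3) (k : ℕ),
      (projOutcome n b o * prefixPauli n b' k).trace
      = ∏ i : Fin n, ((((2 : ℂ)⁻¹ • ((1 : Matrix (Fin 2) (Fin 2) ℂ)
            + ((-1 : ℂ) ^ (o i : ℕ)) • pauli (b i)))) *
          (if (i : ℕ) < k then pauli (b' i) else 1)).trace := fun b' k =>
    trace_prodMat _ _
  have expand : ∀ b' : Fin n → Fin 3,
      (projOutcome n b o * rhoState n b' α β).trace
      = ((2 : ℂ) ^ n)⁻¹ * ((projOutcome n b o * 1).trace
          + ∑ k ∈ Finset.Icc 1 (n - 1),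
              (β k : ℂ) * (projOutcome n b o * prefixPauli n b' k).trace
          + (α : ℂ) * (projOutcome n b o * prefixPauli n b' n).trace) := by
    intro b'
    simp [rhoState, Matrix.mul_smul, Matrix.mul_add, Matrix.mul_sum, Finset.mul_sum,
      Matrix.trace_add, Matrix.trace_smul, Matrix.trace_sum, smul_eq_mul, mul_add]
  have hpre : ∀ k ∈ Finset.Icc 1 (n - 1), prefixPauli n b0 k = prefixPauli n b1 k := by
    intro k hk
    unfold prefixPauli
    ext x y
    simp only [Matrix.of_apply]
    refine Finset.prod_congr rfl fun i _ => ?_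
    by_cases h : (i : ℕ) < k
    · have hi : (i : ℕ) < n - 1 := lt_of_lt_of_le h (Finset.mem_Icc.mp hk).2
      simp [h, hb0 i, hb1 i, hi]
    · simp [h]
  have hzero : ∀ b' : Fin n → Fin 3, b ≠ b' →
      (projOutcome n b o * prefixPauli n b' n).trace = 0 := by
    intro b' hne
    rw [key b' n]
    obtain ⟨i, hi⟩ := Function.ne_iff.mp hne
    apply Finset.prod_eq_zero (Finset.mem_univ i)
    rw [if_pos i.isLt, tr_proj_pauli]
    simp [hi]
  have hsum : (∑ k ∈ Finset.Icc 1 (n - 1),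
        (β k : ℂ) * (projOutcome n b o * prefixPauli n b0 k).trace)
      = ∑ k ∈ Finset.Icc 1 (n - 1),
        (β k : ℂ) * (projOutcome n b o * prefixPauli n b1 k).trace :=
    Finset.sum_congr rfl fun k hk => by rw [hpre k hk]
  rw [expand b0, expand b1, hzero b0 h0, hzero b1 h1, hsum]


end
end

section
/- Let Ω be a finite type, let q be a probability mass function on Ω with q(o) > 0 for all o, and let r : Ω → ℝ satisfy r(o) > −1 for all o and ∑_{o} q(o) r(o) = 0. Define p₀(o) := q(o)(1 + r(o)), which is a probability mass function on Ω. Then the Kullback–Leibler divergence satisfies D_KL(p₀ ‖ q) = ∑_{o} q(o)[(1 + r(o)) log(1 + r(o)) − r(o)] ≤ ∑_{o} q(o) r(o)². -/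
open Finset

/-- Second-order KL bound: if `q` is a strictly positive pmf on a finite type `Ω`,
`r : Ω → ℝ` satisfies `r(o) > −1` and `∑ q(o) r(o) = 0`, and `p₀(o) := q(o)(1 + r(o))`,
then `p₀` is a pmf and the Kullback–Leibler divergence satisfies
`D_KL(p₀ ‖ q) = ∑ q(o)[(1 + r(o)) log(1 + r(o)) − r(o)] ≤ ∑ q(o) r(o)²`. -/
theorem kl_second_order_bound {Ω : Type*} [Fintype Ω] (q r : Ω → ℝ)
    (hq : ∀ o, 0 < q o) (hq1 : ∑ o, q o = 1)
    (hr : ∀ o, -1 < r o) (hr0 : ∑ o, q o * r o = 0) :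
    (∑ o, q o * (1 + r o) = 1) ∧
    (∑ o, (q o * (1 + r o)) * Real.log ((q o * (1 + r o)) / q o) =
      ∑ o, q o * ((1 + r o) * Real.log (1 + r o) - r o)) ∧
    ∑ o, (q o * (1 + r o)) * Real.log ((q o * (1 + r o)) / q o) ≤
      ∑ o, q o * (r o) ^ 2 := by
  have hterm : ∀ o, (q o * (1 + r o)) * Real.log ((q o * (1 + r o)) / q o)
      = q o * ((1 + r o) * Real.log (1 + r o)) := by
    intro o
    have hne : q o ≠ 0 := (hq o).ne'
    rw [mul_comm (q o) (1 + r o), mul_div_assoc, div_self hne, mul_one]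
    ring
  refine ⟨?_, ?_, ?_⟩
  · simp [mul_add, Finset.sum_add_distrib, hq1, hr0]
  · simp only [hterm, mul_sub, Finset.sum_sub_distrib, hr0, sub_zero]
  · simp only [hterm]
    have key : ∀ o, q o * ((1 + r o) * Real.log (1 + r o)) ≤ q o * (r o + r o ^ 2) := by
      intro o
      have h1 : (0:ℝ) < 1 + r o := by linarith [hr o]
      have h2 : Real.log (1 + r o) ≤ (1 + r o) - 1 := Real.log_le_sub_one_of_pos h1
      have := (hq o).le
      nlinarith [mul_le_mul_of_nonneg_left h2 h1.le]
    calc ∑ o, q o * ((1 + r o) * Real.log (1 + r o))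
        ≤ ∑ o, q o * (r o + r o ^ 2) := Finset.sum_le_sum fun o _ => key o
      _ = ∑ o, q o * (r o) ^ 2 := by
          simp [mul_add, Finset.sum_add_distrib, hr0]
end

section
/- Let η ∈ (0, 1/4] and let p, q ∈ (0,1) satisfy p ≤ η and q ≥ 1 − η. Then the Kullback–Leibler divergence between the Bernoulli distributions with parameters p and q satisfies p log(p/q) + (1 − p) log((1 − p)/(1 − q)) ≥ (1/4) log(1/η). -/
/-- Bernoulli KL lower bound: if `η ∈ (0, 1/4]`, `p, q ∈ (0,1)`, `p ≤ η`, and `q ≥ 1 − η`,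
then `p log(p/q) + (1 − p) log((1 − p)/(1 − q)) ≥ (1/4) log(1/η)`. -/
theorem bernoulli_kl_lower_bound (η p q : ℝ)
    (hη0 : 0 < η) (hη1 : η ≤ 1 / 4)
    (hp0 : 0 < p) (hp1 : p < 1) (hq0 : 0 < q) (hq1 : q < 1)
    (hpη : p ≤ η) (hqη : 1 - η ≤ q) :
    (1 / 4) * Real.log (1 / η) ≤
      p * Real.log (p / q) + (1 - p) * Real.log ((1 - p) / (1 - q)) := by
  have hlogq : Real.log q < 0 := Real.log_neg hq0 hq1
  have hpq : p * Real.log p ≤ p * Real.log (p / q) := by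
    rw [Real.log_div hp0.ne' hq0.ne']
    nlinarith
  have hp14 : p ≤ 1 / 4 := le_trans hpη hη1
  have h1p0 : (0:ℝ) < 1 - p := by linarith
  have h1q0 : (0:ℝ) < 1 - q := by linarith
  have hlA : Real.log (3/4) ≤ Real.log (1 - p) :=
    Real.log_le_log (by norm_num) (by linarith)
  have hlB : Real.log (1 - q) ≤ Real.log η :=
    Real.log_le_log h1q0 (by linarith)
  have hle34 : Real.log η ≤ Real.log (3/4) :=
    Real.log_le_log hη0 (by linarith)
  have h2 : (3/4) * (Real.log (3/4) - Real.log η) ≤ (1 - p) * Real.log ((1 - p) / (1 - q)) := by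
    rw [Real.log_div h1p0.ne' h1q0.ne']
    nlinarith
  -- p * log p ≥ -(1/e)
  have he : (0:ℝ) < Real.exp 1 := Real.exp_pos 1
  have hple : -(1 / Real.exp 1) ≤ p * Real.log p := by
    have h := Real.log_le_sub_one_of_pos (show (0:ℝ) < 1 / (Real.exp 1 * p) by positivity)
    rw [one_div, Real.log_inv, Real.log_mul he.ne' hp0.ne', Real.log_exp] at h
    have key : (-Real.log p) * p ≤ ((Real.exp 1 * p)⁻¹) * p :=
      mul_le_mul_of_nonneg_right (by linarith) hp0.le
    have heq : ((Real.exp 1 * p)⁻¹) * p = 1 / Real.exp 1 := by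
      field_simp
    rw [heq] at key
    nlinarith
  -- numeric bounds
  have hlog2 : (0.6931471803 : ℝ) < Real.log 2 := Real.log_two_gt_d9
  have he9 : (2.7182818283 : ℝ) < Real.exp 1 := Real.exp_one_gt_d9
  have hinv_e : 1 / Real.exp 1 ≤ 1 / 2.7182818283 :=
    one_div_le_one_div_of_le (by norm_num) he9.le
  have hlog34 : -(1/3 : ℝ) ≤ Real.log (3/4) := by
    have h := Real.log_le_sub_one_of_pos (show (0:ℝ) < 4/3 by norm_num)
    rw [show (3/4:ℝ) = (4/3)⁻¹ by norm_num, Real.log_inv]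
    linarith
  have hηlog : Real.log η ≤ -(2 * Real.log 2) := by
    have h := Real.log_le_log hη0 hη1
    rw [show (1/4:ℝ) = (2^2 : ℝ)⁻¹ by norm_num, Real.log_inv, Real.log_pow] at h
    push_cast at h
    linarith
  rw [Real.log_div one_ne_zero hη0.ne', Real.log_one]
  nlinarith [hle34, hlA]
end
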